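/- Let $(R,\mathfrak{m})$ be a Noetherian local ring and $Q$ a finitely generated $R$-module. Then there are only finitely many isomorphism classes of $R$-modules that occur as direct summands of $Q$. -/

import Mathlib

open IsLocalRing CategoryTheory

noncomputable section

/-- The depth of a module over a local ring: the supremum of lengths of
regular sequences contained in the maximal ideal. -/
def moduleDepth (R M : Type) [CommRing R] [IsLocalRing R]
    [AddCommGroup M] [Module R M] : ℕ∞ :=
  sSup {n : ℕ∞ | ∃ rs : List R, (rs.length : ℕ∞) = n ∧
    (∀ r ∈ rs, r ∈ maximalIdeal R) ∧ RingTheory.Sequence.IsRegular M rs}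

/-- A maximal Cohen-Macaulay module over a local ring: finitely generated, nonzero,
with depth equal to the Krull dimension of the ring. -/
def IsMCM (R M : Type) [CommRing R] [IsLocalRing R]
    [AddCommGroup M] [Module R M] : Prop :=
  Module.Finite R M ∧ Nontrivial M ∧ (moduleDepth R M : WithBot ℕ∞) = ringKrullDim R

/-- A Cohen-Macaulay local ring. -/
def IsCMLocalRing (R : Type) [CommRing R] [IsLocalRing R] : Prop :=
  (moduleDepth R R : WithBot ℕ∞) = ringKrullDim R

/-- The Ext group `Ext^n_R(M, N)` as an `R`-module. -/
def ExtMod (R : Type) [CommRing R] (n : ℕ) (M N : Type)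
    [AddCommGroup M] [Module R M] [AddCommGroup N] [Module R N] : Type :=
  ((Ext R (ModuleCat R) n).obj (Opposite.op (ModuleCat.of R M))).obj (ModuleCat.of R N)

instance (R : Type) [CommRing R] (n : ℕ) (M N : Type)
    [AddCommGroup M] [Module R M] [AddCommGroup N] [Module R N] :
    AddCommGroup (ExtMod R n M N) := by
  unfold ExtMod; infer_instance

instance (R : Type) [CommRing R] (n : ℕ) (M N : Type)
    [AddCommGroup M] [Module R M] [AddCommGroup N] [Module R N] :
    Module R (ExtMod R n M N) := by
  unfold ExtMod; infer_instance

/-- An indecomposable module. -/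
def IsIndecomposable (R M : Type) [CommRing R] [AddCommGroup M] [Module R M] : Prop :=
  Nontrivial M ∧ ∀ N₁ N₂ : Submodule R M, IsCompl N₁ N₂ → N₁ = ⊥ ∨ N₂ = ⊥

/-- Countable Cohen-Macaulay type: there is a countable set of finitely presented
modules containing, up to isomorphism, all maximal Cohen-Macaulay modules. -/
def HasCountableCMType (R : Type) [CommRing R] [IsLocalRing R] : Prop :=
  ∃ S : Set (Σ n : ℕ, Submodule R (Fin n → R)), S.Countable ∧
    ∀ (M : Type) [AddCommGroup M] [Module R M], IsMCM R M →
      ∃ s ∈ S, Nonempty (M ≃ₗ[R] ((Fin s.1 → R) ⧸ s.2))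

/-- Injective dimension at most `n`, via vanishing of Ext. -/
def HasInjDimLE (R Y : Type) [CommRing R] [AddCommGroup Y] [Module R Y] (n : ℕ) : Prop :=
  ∀ (M : Type) [AddCommGroup M] [Module R M] (i : ℕ), n < i → Subsingleton (ExtMod R i M Y)

/-- Finite injective dimension. -/
def HasFiniteInjDim (R Y : Type) [CommRing R] [AddCommGroup Y] [Module R Y] : Prop :=
  ∃ n, HasInjDimLE R Y n

/-- A regular local ring: Noetherian local, whose maximal ideal is generated by
`dim R` elements. -/
def IsRegularLocalRing' (A : Type) [CommRing A] : Prop :=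
  IsNoetherianRing A ∧ ∃ h : IsLocalRing A, ∃ s : Finset A,
    Ideal.span (s : Set A) = @IsLocalRing.maximalIdeal A _ h ∧
    ((s.card : ℕ∞) : WithBot ℕ∞) = ringKrullDim A

/-- A catenary ring: any two saturated chains of primes with the same endpoints
have the same length. -/
def IsCatenaryRing (A : Type) [CommRing A] : Prop :=
  ∀ c d : RelSeries ({p : PrimeSpectrum A × PrimeSpectrum A | p.1 ⋖ p.2} :
      SetRel (PrimeSpectrum A) (PrimeSpectrum A)),
    c.head = d.head → c.last = d.last → c.length = d.length

/-- A regular (not necessarily local) Noetherian ring: all localizations at primes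
are regular local rings. -/
def IsRegularRing' (A : Type) [CommRing A] : Prop :=
  ∀ p : PrimeSpectrum A, IsRegularLocalRing' (Localization.AtPrime p.asIdeal)

/-- An excellent local ring: Noetherian, universally catenary, J-2 (regular loci of
finite type algebras are open), with geometrically regular formal fibres. -/
def IsExcellentLocalRing (R : Type) [CommRing R] [IsLocalRing R] : Prop :=
  IsNoetherianRing R ∧
  (∀ n : ℕ, IsCatenaryRing (MvPolynomial (Fin n) R)) ∧
  (∀ (A : Type) [CommRing A] [Algebra R A], Algebra.FiniteType R A →
      IsOpen {p : PrimeSpectrum A | IsRegularLocalRing' (Localization.AtPrime p.asIdeal)}) ∧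
  (∀ p : PrimeSpectrum R,
    ∀ (L : Type) [Field L] [Algebra (ResidueField (Localization.AtPrime p.asIdeal)) L],
      FiniteDimensional (ResidueField (Localization.AtPrime p.asIdeal)) L →
      letI : Algebra R L := ((algebraMap (ResidueField (Localization.AtPrime p.asIdeal)) L).comp
        (algebraMap R (ResidueField (Localization.AtPrime p.asIdeal)))).toAlgebra
      IsRegularRing' (TensorProduct R L (AdicCompletion (maximalIdeal R) R)))

/-- A free resolution of `M` by finitely generated free modules. -/
structure FreeRes (R : Type) [CommRing R] (M : Type) [AddCommGroup M] [Module R M] where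
  rank : ℕ → ℕ
  aug : (Fin (rank 0) → R) →ₗ[R] M
  d : (i : ℕ) → ((Fin (rank (i+1)) → R) →ₗ[R] (Fin (rank i) → R))
  aug_surjective : Function.Surjective aug
  exact_zero : LinearMap.range (d 0) = LinearMap.ker aug
  exact_succ : ∀ i, LinearMap.range (d (i+1)) = LinearMap.ker (d i)

/-- A minimal free resolution over a local ring. -/
structure MinFreeRes (R : Type) [CommRing R] [IsLocalRing R]
    (M : Type) [AddCommGroup M] [Module R M] extends FreeRes R M where
  minimal_aug : LinearMap.ker aug ≤ (maximalIdeal R) • ⊤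
  minimal : ∀ i, LinearMap.range (d i) ≤ (maximalIdeal R) • ⊤

/-- `S` is (isomorphic to) the `n`-th syzygy of `M` in the given free resolution;
the `0`-th syzygy is `M` itself, and for `n ≥ 1` it is the image of `d (n-1)`. -/
def FreeRes.IsSyzygy {R : Type} [CommRing R] {M : Type} [AddCommGroup M] [Module R M]
    (F : FreeRes R M) (n : ℕ) (S : Type) [AddCommGroup S] [Module R S] : Prop :=
  match n with
  | 0 => Nonempty (S ≃ₗ[R] M)
  | k+1 => Nonempty (S ≃ₗ[R] LinearMap.range (F.d k))

/-- A canonical module for a Cohen-Macaulay local ring: a maximal Cohen-Macaulay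
module of finite injective dimension whose endomorphism ring is `R`. -/
def HasCanonicalModule (R : Type) [CommRing R] [IsLocalRing R] : Prop :=
  ∃ ω : ModuleCat R, Module.Finite R ω ∧ IsMCM R ω ∧ HasFiniteInjDim R ω ∧
    Nonempty (Module.End R ω ≃ₐ[R] R)

/-- The height of an ideal: the infimum of dimensions of localizations at primes
containing it. -/
def idealHeight (R : Type) [CommRing R] (J : Ideal R) : WithBot ℕ∞ :=
  sInf {h | ∃ p : PrimeSpectrum R, J ≤ p.asIdeal ∧
    h = ringKrullDim (Localization.AtPrime p.asIdeal)}

end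

/-
Direct summands of `Q` are the images of idempotents of `E = End_R Q`, and equivalent
idempotents `e = B A`, `f = A B` have isomorphic images. Instead of completing `R` and using
Krull–Schmidt, one works modulo the Jacobson radical `J` of `E`. As `E` is a finite `R`-algebra,
`m E ⊆ J`, so `E / J` is a finite algebra over `R / m` with zero radical, hence semisimple, and
its principal left ideals fall into finitely many isomorphism classes. Isomorphic left ideals
generated by idempotents `ē`, `f̄` make them equivalent, and this equivalence lifts to `E`
because elements of `E` that are units modulo `J` are units.
-/

namespace Ring

variable {E : Type*} [Ring E]

theorem exists_mul_one_sub_eq_one_of_mem_jacobson {z : E} (hz : z ∈ jacobson E) :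
    ∃ u, u * (1 - z) = 1 := by
  obtain ⟨u, hu⟩ := Ideal.mem_jacobson_iff.1 (Ideal.jacobson_bot (R := E) ▸ hz) (-1)
  refine ⟨u, ?_⟩
  rw [Ideal.mem_bot] at hu
  rw [← sub_eq_zero, ← hu]
  noncomm_ring

theorem isUnit_one_sub_of_mem_jacobson {z : E} (hz : z ∈ jacobson E) : IsUnit (1 - z) := by
  obtain ⟨u, hu⟩ := exists_mul_one_sub_eq_one_of_mem_jacobson hz
  -- `u = 1 - (-u z)` with `-u z ∈ J` also has a left inverse `v`, which must be `1 - z`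
  obtain ⟨v, hv⟩ :=
    exists_mul_one_sub_eq_one_of_mem_jacobson (neg_mem (Ideal.mul_mem_left _ u hz))
  have hvu : v * u = 1 := by
    rwa [show 1 - -(u * z) = u by rw [← hu]; noncomm_ring] at hv
  have hv_eq : v = 1 - z := by
    calc v = v * (u * (1 - z)) := by rw [hu, mul_one]
      _ = 1 - z := by rw [← mul_assoc, hvu, one_mul]
  exact ⟨⟨1 - z, u, hv_eq ▸ hvu, hu⟩, rfl⟩

end Ring

section IdempotentEquiv

variable {E : Type*} [Ring E]

theorem exists_mul_eq_of_isUnit {e f A B : E} (he : IsIdempotentElem e) (hf : IsIdempotentElem f)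
    (hA : f * A * e = A) (hB : e * B * f = B)
    (hx : IsUnit (A * B + 1 - f)) (hy : IsUnit (B * A + 1 - e)) :
    ∃ B', A * B' = f ∧ B' * A = e := by
  obtain ⟨x, hx⟩ := hx
  obtain ⟨y, hy⟩ := hy
  have hfA : f * A = A := by rw [← hA, ← mul_assoc, ← mul_assoc, hf.eq]
  have hAe : A * e = A := by rw [← hA, mul_assoc, he.eq]
  have heB : e * B = B := by rw [← hB, ← mul_assoc, ← mul_assoc, he.eq]
  have hBf : B * f = B := by rw [← hB, mul_assoc, hf.eq]
  -- `f x = A B` and `y B = B A B = B x`, so `B x⁻¹ = y⁻¹ B` inverts `A` between the corners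
  have hfx : f * x = A * B := by
    rw [hx, mul_sub, mul_add, ← mul_assoc, hfA, mul_one, hf.eq, add_sub_cancel_right]
  have hye : y * e = B * A := by
    rw [hy, sub_mul, add_mul, mul_assoc, hAe, one_mul, he.eq, add_sub_cancel_right]
  have hyB : y * B = B * x := by
    rw [hy, hx, sub_mul, add_mul, mul_sub, mul_add, heB, hBf, one_mul, mul_one, mul_assoc]
  refine ⟨B * ↑x⁻¹, ?_, ?_⟩
  · rw [← mul_assoc, ← hfx, mul_assoc, x.mul_inv, mul_one]
  · have hBx : B * ↑x⁻¹ = ↑y⁻¹ * B := by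
      rw [Units.eq_inv_mul_iff_mul_eq, ← mul_assoc, hyB, mul_assoc, x.mul_inv, mul_one]
    rw [hBx, mul_assoc, ← hye, ← mul_assoc, y.inv_mul, one_mul]

theorem exists_mul_eq_of_map_mul_eq {S : Type*} [Ring S] (σ : E →+* S)
    (hσ : Function.Surjective σ) (hker : RingHom.ker σ ≤ Ring.jacobson E) {e f : E}
    (he : IsIdempotentElem e) (hf : IsIdempotentElem f) {a b : S}
    (hab : a * b = σ f) (hba : b * a = σ e) :
    ∃ A B : E, A * B = f ∧ B * A = e := by
  have isUnit_of_map_eq_one : ∀ w, σ w = 1 → IsUnit w := fun w hw => by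
    simpa using Ring.isUnit_one_sub_of_mem_jacobson (hker (by simp [hw] : 1 - w ∈ RingHom.ker σ))
  -- the image of `q x p * p y q` is `(σ x * σ y)⁵ = σ q`
  have map_corner_mul : ∀ {p q x y : E}, IsIdempotentElem q → σ x * σ y = σ q →
      σ y * σ x = σ p → σ (q * x * p * (p * y * q)) = σ q := by
    intro p q x y hq hxy hyx
    have h := hq.map σ
    rw [← hxy] at h ⊢
    simp only [map_mul, ← hxy, ← hyx]
    simpa only [pow_succ, pow_zero, one_mul, mul_assoc] using h.pow_succ_eq 4
  obtain ⟨a₀, rfl⟩ := hσ a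
  obtain ⟨b₀, rfl⟩ := hσ b
  set A := f * a₀ * e
  set B := e * b₀ * f
  have hσAB : σ (A * B) = σ f := map_corner_mul hf hab hba
  have hσBA : σ (B * A) = σ e := map_corner_mul he hba hab
  obtain ⟨B', hAB', hB'A⟩ := exists_mul_eq_of_isUnit (A := A) (B := B) he hf
    (by simp only [A, ← mul_assoc, hf.eq]; simp only [mul_assoc, he.eq])
    (by simp only [B, ← mul_assoc, he.eq]; simp only [mul_assoc, hf.eq])
    (isUnit_of_map_eq_one _ (by rw [map_sub, map_add, hσAB, map_one, add_sub_cancel_left]))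
    (isUnit_of_map_eq_one _ (by rw [map_sub, map_add, hσBA, map_one, add_sub_cancel_left]))
  exact ⟨A, B', hAB', hB'A⟩

theorem exists_mul_eq_of_span_singleton_equiv {S : Type*} [Ring S] {ε δ : S}
    (hε : IsIdempotentElem ε) (hδ : IsIdempotentElem δ)
    (ψ : Submodule.span S {ε} ≃ₗ[S] Submodule.span S {δ}) :
    ∃ a b : S, a * b = δ ∧ b * a = ε := by
  have map_eq_mul : ∀ {ε δ : S}, IsIdempotentElem ε →
      ∀ (φ : Submodule.span S {ε} ≃ₗ[S] Submodule.span S {δ}) (x : Submodule.span S {ε}),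
        (φ x : S) = x * φ ⟨ε, Submodule.mem_span_singleton_self ε⟩ := by
    rintro ε δ hε φ ⟨x, hx⟩
    have hxε : (⟨x, hx⟩ : Submodule.span S {ε}) =
        x • ⟨ε, Submodule.mem_span_singleton_self ε⟩ := by
      obtain ⟨c, rfl⟩ := Submodule.mem_span_singleton.1 hx
      ext
      simp [mul_assoc, hε.eq]
    conv_lhs => rw [hxε, map_smul]
    rfl
  refine ⟨ψ.symm ⟨δ, Submodule.mem_span_singleton_self δ⟩,
    ψ ⟨ε, Submodule.mem_span_singleton_self ε⟩, ?_, ?_⟩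
  · rw [← map_eq_mul hε ψ, LinearEquiv.apply_symm_apply]
  · rw [← map_eq_mul hδ ψ.symm, LinearEquiv.symm_apply_apply]

end IdempotentEquiv

theorem exists_subset_isCompl_finset_sup {α : Type*} [Lattice α] [BoundedOrder α]
    [IsModularLattice α] {T : Finset α} (hT : ∀ a ∈ T, IsAtom a) (hsup : T.sup id = ⊤)
    (b : α) :
    ∃ t ⊆ T, IsCompl b (t.sup id) := by
  classical
  obtain ⟨t, ht⟩ := (T.powerset.filter fun t => Disjoint b (t.sup id)).exists_maximal
    ⟨∅, by simp⟩
  simp only [Finset.mem_filter, Finset.mem_powerset] at ht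
  obtain ⟨⟨htT, hdisj⟩, hmax⟩ := ht
  refine ⟨t, htT, hdisj, codisjoint_iff_le_sup.2 ?_⟩
  rw [← hsup, Finset.sup_le_iff]
  intro a ha
  by_contra hle
  -- an atom outside `b ⊔ sup t` could be added to `t`
  have hdisj' : Disjoint b (t.sup id ⊔ a) :=
    hdisj.disjoint_sup_right_of_disjoint_sup_left ((hT a ha).not_le_iff_disjoint.1 hle).symm
  have hat : a ∉ t := fun hat => hle (le_sup_of_le_right (Finset.le_sup (f := id) hat))
  have := @hmax (insert a t) ⟨Finset.insert_subset ha htT, by rwa [Finset.sup_insert, sup_comm]⟩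
    (Finset.subset_insert a t)
  exact hat (this (Finset.mem_insert_self a t))

theorem IsSemisimpleModule.exists_finset_equiv_quotient {S : Type*} [Ring S] (M : Type*)
    [AddCommGroup M] [Module S M] [IsSemisimpleModule S M] [Module.Finite S M] :
    ∃ X : Finset (Submodule S M), ∀ N : Submodule S M, ∃ K ∈ X,
      Nonempty (N ≃ₗ[S] M ⧸ K) := by
  classical
  obtain ⟨T, hTfin, -, hTsup, hTsimple⟩ :=
    ((IsSemisimpleModule.finite_tfae (R := S) (M := M)).out 0 4).1 ‹_›
  refine ⟨hTfin.toFinset.powerset.image (·.sup id), fun N => ?_⟩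
  obtain ⟨t, htT, hcompl⟩ := exists_subset_isCompl_finset_sup (T := hTfin.toFinset)
    (fun m hm => isSimpleModule_iff_isAtom.1 (hTsimple m (hTfin.mem_toFinset.1 hm)))
    (by rw [Finset.sup_id_eq_sSup, hTfin.coe_toFinset, hTsup]) N
  exact ⟨t.sup id, Finset.mem_image_of_mem _ (Finset.mem_powerset.2 htT),
    ⟨(Submodule.quotientEquivOfIsCompl _ _ hcompl.symm).symm⟩⟩

theorem exists_finite_isIdempotentElem_equiv {E S : Type*} [Ring E] [Ring S]
    [IsSemisimpleRing S] (σ : E →+* S) (hσ : Function.Surjective σ)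
    (hker : RingHom.ker σ ≤ Ring.jacobson E) :
    ∃ F : Set E, F.Finite ∧ (∀ f ∈ F, IsIdempotentElem f) ∧
      ∀ e, IsIdempotentElem e → ∃ f ∈ F, ∃ A B : E, A * B = f ∧ B * A = e := by
  obtain ⟨X, hX⟩ := IsSemisimpleModule.exists_finset_equiv_quotient (S := S) S
  choose label hlabel hequiv using fun e : E => hX (Submodule.span S {σ e})
  obtain ⟨F, hFidem, hFfin, hFlabel⟩ := Set.exists_subset_image_finite_and.1
    ⟨label '' {e | IsIdempotentElem e}, subset_rfl,
      X.finite_toSet.subset (Set.image_subset_iff.2 fun e _ => hlabel e), rfl⟩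
  refine ⟨F, hFfin, hFidem, fun e he => ?_⟩
  obtain ⟨f, hfF, hfe⟩ : label e ∈ label '' F := hFlabel ▸ ⟨e, he, rfl⟩
  obtain ⟨ψe⟩ := hequiv e
  obtain ⟨ψf⟩ := hequiv f
  obtain ⟨a, b, hab, hba⟩ := exists_mul_eq_of_span_singleton_equiv (he.map σ)
    ((hFidem hfF).map σ) (ψe.trans (hfe ▸ ψf).symm)
  exact ⟨f, hfF, exists_mul_eq_of_map_mul_eq σ hσ hker he (hFidem hfF) hab hba⟩

section FiniteAlgebra

variable {R A : Type*} [CommRing R] [Ring A] [Algebra R A] [Module.Finite R A]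

theorem algebraMap_mem_jacobson_of_mem_jacobson {r : R} (hr : r ∈ Ring.jacobson R) :
    algebraMap R A r ∈ Ring.jacobson A := by
  rw [← Ideal.jacobson_bot, Ideal.mem_jacobson_iff]
  intro y
  -- Nakayama: right multiplication by `y r + 1` is onto, as it is the identity modulo `r A`
  have hsurj : LinearMap.range (LinearMap.mulRight R (y * algebraMap R A r + 1)) = ⊤ := by
    refine top_le_iff.1 (Submodule.le_of_le_smul_of_le_jacobson_bot (I := Ideal.span {r})
      Module.Finite.fg_top
      ((Ideal.span_singleton_le_iff_mem _).2 (Ideal.jacobson_bot (R := R) ▸ hr)) ?_)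
    intro a _
    have ha : a = a * (y * algebraMap R A r + 1) - r • (a * y) := by
      rw [Algebra.smul_def, Algebra.commutes]; noncomm_ring
    rw [ha]
    exact Submodule.sub_mem_sup (LinearMap.mem_range_self _ a)
      (Submodule.smul_mem_smul (Ideal.mem_span_singleton_self r) Submodule.mem_top)
  obtain ⟨z, hz⟩ := LinearMap.range_eq_top.1 hsurj 1
  refine ⟨z, ?_⟩
  rw [Ideal.mem_bot, ← hz, LinearMap.mulRight_apply]
  noncomm_ring

theorem isArtinianRing_of_le_ker_algebraMap (I : Ideal R) [IsArtinianRing (R ⧸ I)]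
    (hI : I ≤ RingHom.ker (algebraMap R A)) : IsArtinianRing A := by
  have htors : Module.IsTorsionBySet R A I := fun x r => by
    rw [Algebra.smul_def, hI r.2, zero_mul]
  let _ := htors.module
  have : Module.Finite (R ⧸ I) A := Module.Finite.of_restrictScalars_finite R (R ⧸ I) A
  have : IsArtinian R A :=
    isArtinian_of_surjective_algebraMap (Ideal.Quotient.mk_surjective (I := I))
  exact isArtinian_of_tower R this

variable (R A) in
theorem IsLocalRing.isSemisimpleRing_quotient_jacobson [IsLocalRing R] :
    IsSemisimpleRing (A ⧸ Ring.jacobson A) := by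
  have : IsArtinianRing (R ⧸ maximalIdeal R) := inferInstanceAs (IsArtinianRing (ResidueField R))
  have : IsArtinianRing (A ⧸ Ring.jacobson A) := by
    refine isArtinianRing_of_le_ker_algebraMap (R := R) (maximalIdeal R) fun r hr => ?_
    rw [RingHom.mem_ker, ← (Ideal.Quotient.mkₐ R _).commutes, Ideal.Quotient.mkₐ_eq_mk,
      Ideal.Quotient.eq_zero_iff_mem]
    exact algebraMap_mem_jacobson_of_mem_jacobson 
      (Ideal.jacobson_bot (R := R) ▸ maximalIdeal_le_jacobson ⊥ hr)
  exact IsArtinianRing.isSemisimpleRing_iff_jacobson.2 (Ring.jacobson_quotient_jacobson A)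

end FiniteAlgebra

section Modules

variable {R Q : Type*} [CommRing R] [AddCommGroup Q] [Module R Q]

theorem exists_isIdempotentElem_equiv_range {M M' : Type*} [AddCommGroup M] [Module R M]
    [AddCommGroup M'] [Module R M'] (φ : (M × M') ≃ₗ[R] Q) :
    ∃ e : Module.End R Q, IsIdempotentElem e ∧ Nonempty (M ≃ₗ[R] LinearMap.range e) := by
  set ι := φ.toLinearMap ∘ₗ LinearMap.inl R M M'
  set π := LinearMap.fst R M M' ∘ₗ φ.symm.toLinearMap
  have hπι : π ∘ₗ ι = LinearMap.id := by ext; simp [ι, π]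
  refine ⟨ι ∘ₗ π, ?_, ⟨?_⟩⟩
  · rw [IsIdempotentElem, Module.End.mul_eq_comp, LinearMap.comp_assoc,
      ← LinearMap.comp_assoc π, hπι, LinearMap.id_comp]
  · rw [LinearMap.range_comp_of_range_eq_top]
    · exact LinearEquiv.ofInjective ι (LinearMap.injective_of_comp_eq_id ι π hπι)
    · exact LinearMap.range_eq_top.2 (LinearMap.surjective_of_comp_eq_id ι π hπι)

theorem Module.End.nonempty_range_equiv_of_mul_eq {e f A B : Module.End R Q}
    (he : IsIdempotentElem e) (hf : IsIdempotentElem f) (hAB : A * B = f) (hBA : B * A = e) :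
    Nonempty (LinearMap.range e ≃ₗ[R] LinearMap.range f) := by
  have hA : ∀ x ∈ LinearMap.range e, A x ∈ LinearMap.range f := by
    rintro _ ⟨x, rfl⟩
    exact ⟨A x, by simp only [← hAB, ← hBA, Module.End.mul_apply]⟩
  have hB : ∀ x ∈ LinearMap.range f, B x ∈ LinearMap.range e := by
    rintro _ ⟨x, rfl⟩
    exact ⟨B x, by simp only [← hAB, ← hBA, Module.End.mul_apply]⟩
  refine ⟨LinearEquiv.ofLinearMap (A.restrict hA) (B.restrict hB) ?_ ?_⟩
  · ext ⟨_, x, rfl⟩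
    simp [← Module.End.mul_apply, hAB, ← mul_assoc, hf.eq]
  · ext ⟨_, x, rfl⟩
    simp [← Module.End.mul_apply, hBA, ← mul_assoc, he.eq]

theorem Module.End.exists_finite_range_equiv [IsNoetherianRing R] [IsLocalRing R]
    [Module.Finite R Q] :
    ∃ F : Set (Module.End R Q), F.Finite ∧
      ∀ e : Module.End R Q, IsIdempotentElem e →
        ∃ f ∈ F, Nonempty (LinearMap.range e ≃ₗ[R] LinearMap.range f) := by
  have := IsLocalRing.isSemisimpleRing_quotient_jacobson R (Module.End R Q)
  obtain ⟨F, hFfin, hFidem, hF⟩ := exists_finite_isIdempotentElem_equiv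
    (Ideal.Quotient.mk (Ring.jacobson (Module.End R Q))) Ideal.Quotient.mk_surjective
    Ideal.mk_ker.le
  refine ⟨F, hFfin, fun e he => ?_⟩
  obtain ⟨f, hfF, A, B, hAB, hBA⟩ := hF e he
  exact ⟨f, hfF, nonempty_range_equiv_of_mul_eq he (hFidem f hfF) hAB hBA⟩

theorem Module.Finite.exists_equiv_quotient_fin (N : Type*) [AddCommGroup N] [Module R N]
    [Module.Finite R N] :
    ∃ p : Σ n : ℕ, Submodule R (Fin n → R),
      Nonempty (N ≃ₗ[R] (Fin p.1 → R) ⧸ p.2) := by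
  obtain ⟨n, g, hg⟩ := Module.Finite.exists_fin' R N
  exact ⟨⟨n, LinearMap.ker g⟩, ⟨(g.quotKerEquivOfSurjective hg).symm⟩⟩

end Modules

theorem finitely_many_direct_summands (R : Type) [CommRing R] [IsNoetherianRing R] [IsLocalRing R]
    (Q : Type) [AddCommGroup Q] [Module R Q] [Module.Finite R Q] :
    ∃ (k : ℕ) (rep : Fin k → Σ n : ℕ, Submodule R (Fin n → R)),
      ∀ (M M' : Type) [AddCommGroup M] [Module R M] [AddCommGroup M'] [Module R M'],
        Nonempty ((M × M') ≃ₗ[R] Q) →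
        ∃ i, Nonempty (M ≃ₗ[R] ((Fin (rep i).1 → R) ⧸ (rep i).2)) := by
  obtain ⟨F, hFfin, hF⟩ := Module.End.exists_finite_range_equiv (R := R) (Q := Q)
  have := hFfin.to_subtype
  choose pres hpres using fun f : F =>
    Module.Finite.exists_equiv_quotient_fin (R := R) (LinearMap.range (f : Module.End R Q))
  refine ⟨Nat.card F, fun i => pres ((Finite.equivFin F).symm i), ?_⟩
  rintro M M' _ _ _ _ ⟨φ⟩
  obtain ⟨e, he, ⟨η⟩⟩ := exists_isIdempotentElem_equiv_range φ
  obtain ⟨f, hfF, ⟨ρ⟩⟩ := hF e he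
  refine ⟨Finite.equivFin F ⟨f, hfF⟩, ?_⟩
  beta_reduce
  rw [Equiv.symm_apply_apply]
  exact ⟨η.trans (ρ.trans (hpres ⟨f, hfF⟩).some)⟩
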